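/- arXiv:1309.7112 — 4 statements merged into one kernel-verified Lean document; each statement's English description precedes it below -/
import Mathlib

section
/- Suppose the quadratic F(x) = a₂x² + a₁x + a₀ with integer coefficients, 0 < a₂ < 2^{n+1}, has two non-real complex conjugate roots α₁ = ᾱ₂. If there exists x ∈ [0,1] with |F(x)| < ψ(2ⁿ) and ψ(2ⁿ) < 2^{-2n}, with the distances |x - α₁|, |x - α₂| each at most 2ψ(2ⁿ)/|F'(α₁)| where |F'(α₁)| ≥ 1, then 1/a₂ ≤ 4ψ(2ⁿ) < 4·2^{-2n}, which is impossible when n is sufficiently large (since 1/a₂ > 2^{-(n+1)}). -/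
/-!
Both conjugate roots lie within `2ψ` of the real point `x`, so they are at most `4ψ` apart. On the
other hand distinct roots of an integer quadratic are at least `1 / a₂ > 2^{-(n+1)}` apart, and
`2^{-(n+1)} < 4 · 2^{-2n}` fails once `n ≥ 3`.
-/

theorem discrim_eq_sq_mul_sub_of_roots {R : Type*} [CommRing R] [NoZeroDivisors R] {a b c x y : R}
    (hx : a * x ^ 2 + b * x + c = 0) (hy : a * y ^ 2 + b * y + c = 0) (hxy : x ≠ y) :
    discrim a b c = (a * (x - y)) ^ 2 := by
  have hsum : a * (x + y) + b = 0 := by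
    have hfac : (x - y) * (a * (x + y) + b) = 0 := by linear_combination hx - hy
    exact (mul_eq_zero.mp hfac).resolve_left (sub_ne_zero.mpr hxy)
  rw [discrim]
  linear_combination -4 * a * hx + (2 * a * x + b + a * (x - y)) * hsum

/-- The discriminant `a² (α₁ - α₂)²` is a nonzero integer. -/
theorem one_div_le_norm_sub_of_int_quadratic_roots {a b c : ℤ} (ha : 0 < a) {α₁ α₂ : ℂ}
    (h₁ : (a : ℂ) * α₁ ^ 2 + (b : ℂ) * α₁ + (c : ℂ) = 0)
    (h₂ : (a : ℂ) * α₂ ^ 2 + (b : ℂ) * α₂ + (c : ℂ) = 0) (hne : α₁ ≠ α₂) :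
    1 / (a : ℝ) ≤ ‖α₁ - α₂‖ := by
  have haR : (0 : ℝ) < a := by exact_mod_cast ha
  have hD : ((discrim a b c : ℤ) : ℂ) = ((a : ℂ) * (α₁ - α₂)) ^ 2 := by
    rw [← discrim_eq_sq_mul_sub_of_roots h₁ h₂ hne]
    simp only [discrim, Int.cast_sub, Int.cast_pow, Int.cast_mul, Int.cast_ofNat]
  have hD_ne : discrim a b c ≠ 0 := by
    intro h
    rw [h, Int.cast_zero, eq_comm, pow_eq_zero_iff two_ne_zero] at hD
    exact mul_ne_zero (by exact_mod_cast ha.ne') (sub_ne_zero.mpr hne) hD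
  have hsq : 1 ≤ ((a : ℝ) * ‖α₁ - α₂‖) ^ 2 := by
    have hnorm := congrArg (‖·‖) hD
    simp only [norm_pow, norm_mul, Complex.norm_intCast, abs_of_pos haR] at hnorm
    rw [← hnorm, ← Int.cast_abs]
    exact_mod_cast Int.one_le_abs hD_ne
  rw [div_le_iff₀ haR, mul_comm]
  exact (one_le_sq_iff₀ (by positivity)).mp hsq

theorem lt_three_of_one_div_lt {n : ℕ} {a : ℤ} (ha : 0 < a) (ha' : a < 2 ^ (n + 1))
    (h : 1 / (a : ℝ) < 4 * (2 : ℝ) ^ (-(2 * n : ℤ))) : n < 3 := by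
  have haR : (0 : ℝ) < a := by exact_mod_cast ha
  have hpow : (2 : ℝ) ^ (2 * n) < 2 ^ (n + 3) := by
    have hzpow : (2 : ℝ) ^ (-(2 * n : ℤ)) = ((2 : ℝ) ^ (2 * n))⁻¹ := by
      rw [zpow_neg]
      norm_cast
    rw [hzpow, ← div_eq_mul_inv, div_lt_div_iff₀ haR (by positivity)] at h
    have ha'R : (a : ℝ) < 2 ^ (n + 1) := by exact_mod_cast ha'
    calc (2 : ℝ) ^ (2 * n) < 4 * a := by linarith
      _ < 4 * 2 ^ (n + 1) := by linarith
      _ = 2 ^ (n + 3) := by ring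
  have := (pow_lt_pow_iff_right₀ (by norm_num : (1 : ℝ) < 2)).mp hpow
  omega

open Complex in
theorem stmt6_general (n : ℕ) (a₀ a₁ a₂ : ℤ) (ha₂ : 0 < a₂) (ha₂' : a₂ < 2 ^ (n + 1))
    (α₁ α₂ : ℂ)
    (hroot₁ : (a₂ : ℂ) * α₁ ^ 2 + (a₁ : ℂ) * α₁ + (a₀ : ℂ) = 0)
    (hroot₂ : (a₂ : ℂ) * α₂ ^ 2 + (a₁ : ℂ) * α₂ + (a₀ : ℂ) = 0)
    (hconj : α₁ = (starRingEnd ℂ) α₂) (him : α₁.im ≠ 0)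
    (ψn : ℝ) (hψpos : 0 < ψn) (hψ : ψn < (2 : ℝ) ^ (-(2 * n : ℤ)))
    (x : ℝ)
    (hder : 1 ≤ ‖2 * (a₂ : ℂ) * α₁ + (a₁ : ℂ)‖)
    (hd₁ : ‖(x : ℂ) - α₁‖ ≤ 2 * ψn / ‖2 * (a₂ : ℂ) * α₁ + (a₁ : ℂ)‖)
    (hd₂ : ‖(x : ℂ) - α₂‖ ≤ 2 * ψn / ‖2 * (a₂ : ℂ) * α₁ + (a₁ : ℂ)‖) :
    (1 : ℝ) / (a₂ : ℝ) ≤ 4 * ψn ∧ 4 * ψn < 4 * (2 : ℝ) ^ (-(2 * n : ℤ)) ∧ n < 3 := by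
  have hne : α₁ ≠ α₂ := by
    rintro rfl
    exact him (conj_eq_iff_im.mp hconj.symm)
  have hsep := one_div_le_norm_sub_of_int_quadratic_roots ha₂ hroot₁ hroot₂ hne
  have hdiv : 2 * ψn / ‖2 * (a₂ : ℂ) * α₁ + (a₁ : ℂ)‖ ≤ 2 * ψn := div_le_self (by positivity) hder
  have hclose : ‖α₁ - α₂‖ ≤ 4 * ψn :=
    calc ‖α₁ - α₂‖ ≤ ‖(x : ℂ) - α₁‖ + ‖(x : ℂ) - α₂‖ := by
          simpa only [dist_eq_norm] using dist_triangle_left α₁ α₂ (x : ℂ)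
      _ ≤ 4 * ψn := by linarith
  have hbound : 1 / (a₂ : ℝ) ≤ 4 * ψn := hsep.trans hclose
  have hψ4 : 4 * ψn < 4 * (2 : ℝ) ^ (-(2 * n : ℤ)) := by linarith
  exact ⟨hbound, hψ4, lt_three_of_one_div_lt ha₂ ha₂' (hbound.trans_lt hψ4)⟩

open Complex in
/-- An integer quadratic `F(x) = a₂x² + a₁x + a₀` with `0 < a₂ < 2^{n+1}` and
two non-real complex conjugate roots `α₁ = ᾱ₂` cannot satisfy `|F(x)| < ψ(2ⁿ)` at a point
`x ∈ [0,1]` (with the stated distance bounds and `ψ(2ⁿ) < 2^{-2n}`) unless `n` is small: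
one gets `1/a₂ ≤ 4ψ(2ⁿ) < 4·2^{-2n}`, and since `1/a₂ > 2^{-(n+1)}` this forces `n < 3`. -/
theorem stmt6 (n : ℕ) (a₀ a₁ a₂ : ℤ) (ha₂ : 0 < a₂) (ha₂' : a₂ < 2 ^ (n + 1))
    (α₁ α₂ : ℂ)
    (hroot₁ : (a₂ : ℂ) * α₁ ^ 2 + (a₁ : ℂ) * α₁ + (a₀ : ℂ) = 0)
    (hroot₂ : (a₂ : ℂ) * α₂ ^ 2 + (a₁ : ℂ) * α₂ + (a₀ : ℂ) = 0)
    (hconj : α₁ = (starRingEnd ℂ) α₂) (him : α₁.im ≠ 0)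
    (ψn : ℝ) (hψpos : 0 < ψn) (hψ : ψn < (2 : ℝ) ^ (-(2 * n : ℤ)))
    (x : ℝ) (hx : x ∈ Set.Icc (0 : ℝ) 1)
    (hFx : |(a₂ : ℝ) * x ^ 2 + (a₁ : ℝ) * x + (a₀ : ℝ)| < ψn)
    (hder : 1 ≤ ‖2 * (a₂ : ℂ) * α₁ + (a₁ : ℂ)‖)
    (hd₁ : ‖(x : ℂ) - α₁‖ ≤ 2 * ψn / ‖2 * (a₂ : ℂ) * α₁ + (a₁ : ℂ)‖)
    (hd₂ : ‖(x : ℂ) - α₂‖ ≤ 2 * ψn / ‖2 * (a₂ : ℂ) * α₁ + (a₁ : ℂ)‖) :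
    (1 : ℝ) / (a₂ : ℝ) ≤ 4 * ψn ∧ 4 * ψn < 4 * (2 : ℝ) ^ (-(2 * n : ℤ)) ∧ n < 3 :=
  stmt6_general n a₀ a₁ a₂ ha₂ ha₂' α₁ α₂ hroot₁ hroot₂ hconj him ψn hψpos hψ x hder hd₁ hd₂
end

section
/- (Lemma 1) Fix integers a₂, a₁ with a₂ > 0 and max(a₂,|a₁|) ≥ 2ⁿ, and let ψ(2ⁿ) > 0. For each integer a₀ with |a₀| < 2^{n+2}, let Δ(F) denote the set of x ∈ [0,1] with |a₂x² + a₁x + a₀| < ψ(2ⁿ), restricted to quadratics F with two distinct real roots. Then the Lebesgue measure of the union Δ(a₂,a₁) = ⋃_{|a₀| < 2^{n+2}} Δ(F) is at most 16·ψ(2ⁿ). -/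
/-!
Substituting `t = 2a₂x + a₁` turns `a₂x² + a₁x + a₀` into `(t² - D) / (4a₂)`, `D` the discriminant,
so on either side of the vertex one has to measure the `t ≥ 0` in a window of length `2a₂` with
`|t² - D| < c := 4a₂ψ` for some admissible `D`; these satisfy `D ≥ 1` and are `p := 4a₂` apart.
The length of `{t : |t² - D| < c}` inside the window is an increment of the square root clamped to
the window. By concavity it is at most `2c/p` times the increment over the gap of length `p` below
`D - c`; these gaps are disjoint, so away from the lower edge of the window the contributions add
up to at most `(2c/p) · 2a₂ = c`. Near the lower edge at most two discriminants contribute, the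
first at most `2c` (as `D ≥ 1`) and the second at most `c` (as `D ≥ 1 + p`). Each side therefore
has `t`-measure at most `4c`, that is `x`-measure at most `8ψ`.
-/

open MeasureTheory Set

/-- For `0 ≤ lo`, `clampedSqrt lo hi u - lo` is the length of `{t ∈ [lo, hi] : t² ≤ u}`. -/
noncomputable def clampedSqrt (lo hi u : ℝ) : ℝ := max lo (min hi √u)

def IsSpaced (p : ℝ) (S : Finset ℝ) : Prop := ∀ s ∈ S, ∀ s' ∈ S, s < s' → s + p ≤ s'

lemma IsSpaced.mono {p : ℝ} {S S' : Finset ℝ} (hS : IsSpaced p S) (h : S' ⊆ S) : IsSpaced p S' :=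
  fun s hs s' hs' => hS s (h hs) s' (h hs')

lemma IsSpaced.sum_sub_le {p lo hi : ℝ} {S : Finset ℝ} (hS : IsSpaced p S) {f : ℝ → ℝ}
    (hf : Monotone f) (hlo : ∀ x, lo ≤ f x) (hhi : ∀ x, f x ≤ hi) :
    ∑ s ∈ S, (f s - f (s - p)) ≤ hi - lo := by
  suffices h : ∀ z, (∀ s ∈ S, s ≤ z) → ∑ s ∈ S, (f s - f (s - p)) ≤ f z - lo by
    obtain ⟨z, hz⟩ := S.bddAbove
    linarith [h z hz, hhi z]
  induction S using Finset.induction_on_max with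
  | empty => simpa using hlo
  | insert a S hlt ih =>
    intro z hz
    have hgap : ∀ s ∈ S, s ≤ a - p := fun s hs => by
      linarith [hS s (Finset.mem_insert_of_mem hs) a (Finset.mem_insert_self a S) (hlt s hs)]
    rw [Finset.sum_insert fun ha => lt_irrefl a (hlt a ha)]
    linarith [ih (hS.mono (Finset.subset_insert a S)) (a - p) hgap,
      hf (hz a (Finset.mem_insert_self a S))]

lemma isSpaced_image_sub_mul (d p : ℝ) (hp : 0 ≤ p) (T : Finset ℤ) :
    IsSpaced p (T.image fun m : ℤ => d - p * m) := by
  intro s hs s' hs' hlt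
  obtain ⟨m, -, rfl⟩ := Finset.mem_image.1 hs
  obtain ⟨m', -, rfl⟩ := Finset.mem_image.1 hs'
  have hm : m' < m := by
    by_contra! hle
    nlinarith [mul_le_mul_of_nonneg_left (Int.cast_le.2 hle : (m : ℝ) ≤ m') hp]
  have : (m' : ℝ) + 1 ≤ m := by exact_mod_cast hm
  nlinarith

lemma sqrt_add_sub_sqrt_sub_le {s c r : ℝ} (hc : 0 ≤ c) (hr : 0 < r) (hs : r ^ 2 ≤ s + c) :
    √(s + c) - √(s - c) ≤ 2 * c / r := by
  have hA : r ≤ √(s + c) := Real.le_sqrt_of_sq_le hs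
  have hAA : √(s + c) ^ 2 = s + c := Real.sq_sqrt (by nlinarith)
  have hBA : √(s - c) ≤ √(s + c) := Real.sqrt_le_sqrt (by linarith)
  have hB : 0 ≤ √(s - c) := Real.sqrt_nonneg _
  have hBB : s - c ≤ √(s - c) ^ 2 := by
    rcases le_total (s - c) 0 with h | h
    · exact h.trans (sq_nonneg _)
    · exact (Real.sq_sqrt h).ge
  rw [le_div_iff₀ hr]
  nlinarith [mul_le_mul_of_nonneg_right hA (sub_nonneg.2 hBA), mul_le_mul_of_nonneg_left hBA hB]

lemma clampedSqrt_mono (lo hi : ℝ) : Monotone (clampedSqrt lo hi) := fun _ _ h =>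
  max_le_max le_rfl (min_le_min le_rfl (Real.sqrt_le_sqrt h))

lemma le_clampedSqrt (lo hi u : ℝ) : lo ≤ clampedSqrt lo hi u := le_max_left _ _

section ClampedSqrt

variable {lo hi : ℝ}

lemma clampedSqrt_le (h : lo ≤ hi) (u : ℝ) : clampedSqrt lo hi u ≤ hi :=
  max_le h (min_le_left _ _)

lemma clampedSqrt_sq {t : ℝ} (hlo : 0 ≤ lo) (ht : t ∈ Icc lo hi) :
    clampedSqrt lo hi (t ^ 2) = t := by
  rw [clampedSqrt, Real.sqrt_sq (hlo.trans ht.1), min_eq_right ht.2, max_eq_right ht.1]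

lemma clampedSqrt_of_le_sq {u : ℝ} (hlo : 0 ≤ lo) (hu : u ≤ lo ^ 2) : clampedSqrt lo hi u = lo :=
  max_eq_left <| (min_le_right _ _).trans <| (Real.sqrt_le_left hlo).2 hu

lemma clampedSqrt_sub_le {u v : ℝ} (huv : u ≤ v) :
    clampedSqrt lo hi v - clampedSqrt lo hi u ≤ √v - √u := by
  have := Real.sqrt_le_sqrt huv
  simp only [clampedSqrt]
  grind

lemma concaveOn_clampedSqrt (h : lo ≤ hi) : ConcaveOn ℝ (Ici (lo ^ 2)) (clampedSqrt lo hi) := by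
  have hsqrt : ConcaveOn ℝ (Ici (lo ^ 2)) (fun u => √u) :=
    Real.strictConcaveOn_sqrt.concaveOn.subset (Ici_subset_Ici.2 (sq_nonneg lo)) (convex_Ici _)
  refine ((concaveOn_const hi (convex_Ici _)).inf hsqrt).congr fun u hu => ?_
  have : lo ≤ √u := Real.le_sqrt_of_sq_le hu
  exact (max_eq_right (le_min h this)).symm

lemma clampedSqrt_add_sub_clampedSqrt_sub_le {s c r : ℝ} (hc : 0 ≤ c) (hr : 0 < r)
    (hs : r ^ 2 ≤ s + c) :
    clampedSqrt lo hi (s + c) - clampedSqrt lo hi (s - c) ≤ 2 * c / r :=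
  (clampedSqrt_sub_le (by linarith)).trans (sqrt_add_sub_sqrt_sub_le hc hr hs)

lemma clampedSqrt_add_sub_clampedSqrt_sub_le_mul (h : lo ≤ hi) {s c p : ℝ} (hc : 0 < c) (hp : 0 < p)
    (hs : lo ^ 2 ≤ s - p - c) :
    clampedSqrt lo hi (s + c) - clampedSqrt lo hi (s - c) ≤
      2 * c / p * (clampedSqrt lo hi (s - c) - clampedSqrt lo hi (s - p - c)) := by
  have := (concaveOn_clampedSqrt h).slope_anti_adjacent (x := s - p - c) (y := s - c) (z := s + c)
    hs (by simp only [mem_Ici]; linarith) (by linarith) (by linarith)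
  rw [show s + c - (s - c) = 2 * c by ring, show s - c - (s - p - c) = p by ring,
    div_le_div_iff₀ (by positivity) hp] at this
  rw [div_mul_eq_mul_div, le_div_iff₀ hp]
  linear_combination this

lemma sum_clampedSqrt_add_sub_clampedSqrt_sub_le_of_lt {c p : ℝ} (hlo : 0 ≤ lo) (hc : 0 ≤ c)
    (hcp : 2 * c ≤ p) (hp : 3 ≤ p) {S : Finset ℝ} (hS : IsSpaced p S) (hS1 : ∀ s ∈ S, 1 ≤ s)
    (hnear : ∀ s ∈ S, s < lo ^ 2 + c + p) :
    ∑ s ∈ S, (clampedSqrt lo hi (s + c) - clampedSqrt lo hi (s - c)) ≤ 3 * c := by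
  rw [← Finset.sum_filter_of_ne (p := fun s => lo ^ 2 < s + c) fun s _ hs => by
    by_contra! h
    rw [clampedSqrt_of_le_sq hlo h, clampedSqrt_of_le_sq hlo (by linarith), sub_self] at hs
    exact hs rfl]
  set S' := S.filter fun s => lo ^ 2 < s + c
  rcases S'.eq_empty_or_nonempty with hempty | hne
  · rw [hempty, Finset.sum_empty]
    positivity
  set s₁ := S'.min' hne
  have hs₁ : s₁ ∈ S ∧ lo ^ 2 < s₁ + c := Finset.mem_filter.1 (S'.min'_mem hne)
  have hlater : ∀ s ∈ S'.erase s₁, s ∈ S ∧ s₁ + p ≤ s := fun s hs => by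
    have hsS := Finset.mem_of_mem_filter s (Finset.mem_of_mem_erase hs)
    exact ⟨hsS, hS _ hs₁.1 _ hsS <| (S'.min'_le s (Finset.mem_of_mem_erase hs)).lt_of_ne
      (Finset.ne_of_mem_erase hs).symm⟩
  have hcard : (S'.erase s₁).card ≤ 1 := by
    have hno : ∀ s ∈ S'.erase s₁, ∀ s' ∈ S'.erase s₁, ¬ s < s' := fun s hs s' hs' hlt => by
      linarith [hS s (hlater s hs).1 s' (hlater s' hs').1 hlt, (hlater s hs).2,
        hnear s' (hlater s' hs').1]
    exact Finset.card_le_one.2 fun s hs s' hs' =>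
      le_antisymm (not_lt.1 (hno s' hs' s hs)) (not_lt.1 (hno s hs s' hs'))
  have hfirst := (clampedSqrt_add_sub_clampedSqrt_sub_le (lo := lo) (hi := hi) hc one_pos
    (by linarith [hS1 s₁ hs₁.1] : (1 : ℝ) ^ 2 ≤ s₁ + c)).trans_eq (div_one _)
  have hrest : ∑ s ∈ S'.erase s₁, (clampedSqrt lo hi (s + c) - clampedSqrt lo hi (s - c)) ≤ c :=
    calc _ ≤ (S'.erase s₁).card • c := Finset.sum_le_card_nsmul _ _ _ fun s hs =>
            (clampedSqrt_add_sub_clampedSqrt_sub_le hc two_pos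
              (by linarith [hS1 s₁ hs₁.1, (hlater s hs).2])).trans_eq (by ring)
      _ ≤ c := by
        rw [nsmul_eq_mul]
        exact mul_le_of_le_one_left hc (by exact_mod_cast hcard)
  rw [← Finset.add_sum_erase S' _ (S'.min'_mem hne)]
  linarith

lemma sum_clampedSqrt_add_sub_clampedSqrt_sub_le {c p : ℝ} (hlo : 0 ≤ lo) (hlohi : lo ≤ hi)
    (hc : 0 < c) (hcp : 2 * c ≤ p) (hp : 3 ≤ p) {S : Finset ℝ} (hS : IsSpaced p S) (hS1 : ∀ s ∈ S, 1 ≤ s) :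
    ∑ s ∈ S, (clampedSqrt lo hi (s + c) - clampedSqrt lo hi (s - c)) ≤
      3 * c + 2 * c / p * (hi - lo) := by
  rw [← Finset.sum_filter_add_sum_filter_not S fun s => lo ^ 2 + c + p ≤ s]
  have hfar := calc
    ∑ s ∈ S with lo ^ 2 + c + p ≤ s, (clampedSqrt lo hi (s + c) - clampedSqrt lo hi (s - c))
      ≤ ∑ s ∈ S with lo ^ 2 + c + p ≤ s,
          2 * c / p * (clampedSqrt lo hi (s - c) - clampedSqrt lo hi (s - p - c)) :=
        Finset.sum_le_sum fun s hs => clampedSqrt_add_sub_clampedSqrt_sub_le_mul hlohi hc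
          (by linarith) (by linarith [(Finset.mem_filter.1 hs).2])
    _ = 2 * c / p * ∑ s ∈ S with lo ^ 2 + c + p ≤ s,
          (clampedSqrt lo hi (s - c) - clampedSqrt lo hi (s - p - c)) := (Finset.mul_sum ..).symm
    _ ≤ 2 * c / p * (hi - lo) := by
        gcongr
        exact (hS.mono (Finset.filter_subset _ _)).sum_sub_le
          (f := fun u => clampedSqrt lo hi (u - c)) (fun _ _ huv => clampedSqrt_mono lo hi (by linarith)) (fun _ => le_clampedSqrt ..)
          (fun _ => clampedSqrt_le hlohi _)
  have hnear := sum_clampedSqrt_add_sub_clampedSqrt_sub_le_of_lt (hi := hi) hlo hc.le hcp hp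
    (hS.mono (Finset.filter_subset _ _)) (fun s hs => hS1 s (Finset.mem_of_mem_filter s hs))
    (fun s hs => not_le.1 (Finset.mem_filter.1 hs).2)
  linarith

end ClampedSqrt

lemma volume_abs_sq_sub_lt_le {w ℓ c p : ℝ} (hℓ : 0 ≤ ℓ) (hc : 0 < c) (hcp : 2 * c ≤ p) (hp : 3 ≤ p)
    {S : Finset ℝ} (hS : IsSpaced p S) (hS1 : ∀ s ∈ S, 1 ≤ s) :
    volume {t : ℝ | t ∈ Icc w (w + ℓ) ∧ 0 ≤ t ∧ ∃ s ∈ S, |t ^ 2 - s| < c} ≤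
      ENNReal.ofReal (3 * c + 2 * c / p * ℓ) := by
  set lo := max w 0
  set hi := max (w + ℓ) 0
  have hlohi : lo ≤ hi := max_le_max (by linarith) le_rfl
  have hcover : {t : ℝ | t ∈ Icc w (w + ℓ) ∧ 0 ≤ t ∧ ∃ s ∈ S, |t ^ 2 - s| < c} ⊆
      ⋃ s ∈ S, Icc (clampedSqrt lo hi (s - c)) (clampedSqrt lo hi (s + c)) := by
    rintro t ⟨ht, ht0, s, hs, hts⟩
    have htlo : t ∈ Icc lo hi := ⟨max_le ht.1 ht0, le_max_of_le_left ht.2⟩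
    rw [abs_lt] at hts
    refine mem_biUnion hs ⟨?_, ?_⟩ <;> rw [← clampedSqrt_sq (le_max_right w 0) htlo] <;>
      exact clampedSqrt_mono lo hi (by linarith)
  have hwidth : hi - lo ≤ ℓ := (max_sub_max_le_max _ _ _ _).trans (by simpa using hℓ)
  calc volume _ ≤ ∑ s ∈ S, volume (Icc (clampedSqrt lo hi (s - c)) (clampedSqrt lo hi (s + c))) :=
        (measure_mono hcover).trans (measure_biUnion_finset_le _ _)
    _ = ENNReal.ofReal (∑ s ∈ S, (clampedSqrt lo hi (s + c) - clampedSqrt lo hi (s - c))) := by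
        simp_rw [Real.volume_Icc]
        exact (ENNReal.ofReal_sum_of_nonneg fun s _ =>
          sub_nonneg.2 (clampedSqrt_mono lo hi (by linarith))).symm
    _ ≤ ENNReal.ofReal (3 * c + 2 * c / p * ℓ) := by
        refine ENNReal.ofReal_le_ofReal ((sum_clampedSqrt_add_sub_clampedSqrt_sub_le
          (le_max_right w 0) hlohi hc hcp hp hS hS1).trans ?_)
        gcongr

lemma four_mul_quadratic_eq (a b c x : ℝ) :
    4 * a * (a * x ^ 2 + b * x + c) = (2 * a * x + b) ^ 2 - discrim a b c := by
  rw [discrim]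
  ring

lemma abs_sq_sub_discrim_lt {a b c ψ x : ℝ} (ha : 0 < a) (h : |a * x ^ 2 + b * x + c| < ψ) :
    |(2 * a * x + b) ^ 2 - discrim a b c| < 4 * a * ψ := by
  rw [← four_mul_quadratic_eq, abs_mul, abs_of_pos (by positivity)]
  gcongr

lemma volume_abs_quadratic_lt_le {a b ψ : ℝ} (ha : 1 ≤ a) (hψ : 0 < ψ) (hψ2 : ψ ≤ 1 / 2)
    (C : Finset ℤ) (hC : ∀ c ∈ C, 1 ≤ discrim a b c) :
    volume {x : ℝ | x ∈ Icc 0 1 ∧ ∃ c ∈ C, |a * x ^ 2 + b * x + c| < ψ} ≤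
      ENNReal.ofReal (16 * ψ) := by
  set S := C.image fun c : ℤ => discrim a b c
  have hS : IsSpaced (4 * a) S := isSpaced_image_sub_mul (b ^ 2) (4 * a) (by positivity) C
  have hS1 : ∀ s ∈ S, 1 ≤ s := by simpa [S] using hC
  set E := fun w : ℝ => {t : ℝ | t ∈ Icc w (w + 2 * a) ∧ 0 ≤ t ∧ ∃ s ∈ S, |t ^ 2 - s| < 4 * a * ψ}
  have hE : ∀ w, volume (E w) ≤ ENNReal.ofReal (16 * a * ψ) := fun w =>
    (volume_abs_sq_sub_lt_le (by positivity) (by positivity) (by nlinarith) (by linarith) hS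
      hS1).trans_eq (by congr 1; field_simp; ring)
  have hcover : {x : ℝ | x ∈ Icc 0 1 ∧ ∃ c ∈ C, |a * x ^ 2 + b * x + c| < ψ} ⊆
      (2 * a * ·) ⁻¹' ((· + b) ⁻¹' (E b ∪ Neg.neg ⁻¹' E (-b - 2 * a))) := by
    rintro x ⟨hx, c, hc, hF⟩
    have ht := abs_sq_sub_discrim_lt (by positivity) hF
    have hmem : discrim a b c ∈ S := Finset.mem_image_of_mem _ hc
    rcases le_total 0 (2 * a * x + b) with h | h
    · exact Or.inl ⟨⟨by nlinarith [hx.1], by nlinarith [hx.2]⟩, h, _, hmem, ht⟩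
    · exact Or.inr ⟨⟨by nlinarith [hx.2], by nlinarith [hx.1]⟩, neg_nonneg.2 h, _, hmem,
        by rwa [neg_sq]⟩
  calc volume _ ≤ ENNReal.ofReal |(2 * a)⁻¹| * volume (E b ∪ Neg.neg ⁻¹' E (-b - 2 * a)) := by
        refine (measure_mono hcover).trans_eq ?_
        rw [Real.volume_preimage_mul_left (by positivity), measure_preimage_add_right]
    _ ≤ ENNReal.ofReal (2 * a)⁻¹ * (ENNReal.ofReal (16 * a * ψ) + ENNReal.ofReal (16 * a * ψ)) := by
        rw [abs_of_pos (by positivity)]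
        gcongr
        exact (measure_union_le _ _).trans (add_le_add (hE b)
          ((Measure.measure_preimage_neg _ _).trans_le (hE _)))
    _ = ENNReal.ofReal (16 * ψ) := by
        rw [← ENNReal.ofReal_add (by positivity) (by positivity),
          ← ENNReal.ofReal_mul (by positivity)]
        congr 1
        field_simp
        ring

theorem stmt9_general (n : ℕ) (a₂ a₁ : ℤ) (ha₂ : 0 < a₂)
    (ψn : ℝ) (hψ : 0 < ψn) :
    volume {x : ℝ | x ∈ Set.Icc (0 : ℝ) 1 ∧ ∃ a₀ : ℤ, |a₀| < 2 ^ (n + 2) ∧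
        0 < a₁ ^ 2 - 4 * a₂ * a₀ ∧
        |(a₂ : ℝ) * x ^ 2 + (a₁ : ℝ) * x + (a₀ : ℝ)| < ψn} ≤
      ENNReal.ofReal (16 * ψn) := by
  rcases le_or_gt 1 (16 * ψn) with hbig | hsmall
  · calc volume _ ≤ volume (Icc (0 : ℝ) 1) := measure_mono fun x hx => hx.1
      _ ≤ _ := by rw [Real.volume_Icc]; exact ENNReal.ofReal_le_ofReal (by linarith)
  set C := (Finset.Ioo (-2 ^ (n + 2)) (2 ^ (n + 2))).filter fun a₀ : ℤ => 0 < a₁ ^ 2 - 4 * a₂ * a₀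
  have hC : ∀ a₀ ∈ C, 1 ≤ discrim (a₂ : ℝ) a₁ a₀ := fun a₀ h => by
    rw [discrim]
    exact_mod_cast (Finset.mem_filter.1 h).2
  refine le_trans (measure_mono ?_) (volume_abs_quadratic_lt_le (by exact_mod_cast ha₂) hψ
    (by linarith) C hC)
  rintro x ⟨hx, a₀, ha₀, hdisc, hF⟩
  exact ⟨hx, a₀, Finset.mem_filter.2 ⟨Finset.mem_Ioo.2 (abs_lt.1 ha₀), hdisc⟩, hF⟩

/-- Lemma 1: Fix integers `a₂ > 0`, `a₁` with `max(a₂,|a₁|) ≥ 2ⁿ` and let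
`ψ(2ⁿ) > 0`. The union over integers `a₀` with `|a₀| < 2^{n+2}` of the sets
`Δ(F) = {x ∈ [0,1] : |a₂x² + a₁x + a₀| < ψ(2ⁿ)}`, restricted to quadratics with two distinct
real roots (positive discriminant), has Lebesgue measure at most `16·ψ(2ⁿ)`. -/
theorem stmt9 (n : ℕ) (a₂ a₁ : ℤ) (ha₂ : 0 < a₂) (hmax : 2 ^ n ≤ max a₂ |a₁|)
    (ψn : ℝ) (hψ : 0 < ψn) :
    volume {x : ℝ | x ∈ Set.Icc (0 : ℝ) 1 ∧ ∃ a₀ : ℤ, |a₀| < 2 ^ (n + 2) ∧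
        0 < a₁ ^ 2 - 4 * a₂ * a₀ ∧
        |(a₂ : ℝ) * x ^ 2 + (a₁ : ℝ) * x + (a₀ : ℝ)| < ψn} ≤
      ENNReal.ofReal (16 * ψn) :=
  stmt9_general n a₂ a₁ ha₂ ψn hψ
end

section
/- Let g be a dimension function with x^{s₁} < g(x) < x^{s₂} for all sufficiently small x > 0, where 0 < s₁, 0 < s₂ ≤ 1, and 2s₁ < 3s₂. Suppose ψ is decreasing and 2^{3n}·g(ψ(2ⁿ)/2ⁿ) < 1 for all large n. Then the series ∑_{n≥1} 2^{n+1}·g(√(8ψ(2ⁿ)/2ⁿ)) converges. -/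
/-- Let `g` be a dimension function with `x^{s₁} < g(x) < x^{s₂}` for all
sufficiently small `x > 0`, where `0 < s₁`, `0 < s₂ ≤ 1` and `2s₁ < 3s₂`. Suppose `ψ` is
decreasing and `2^{3n}·g(ψ(2ⁿ)/2ⁿ) < 1` for all large `n`. Then the series
`∑ₙ 2^{n+1}·g(√(8ψ(2ⁿ)/2ⁿ))` converges. -/
theorem stmt14 (g ψ : ℝ → ℝ) (s₁ s₂ : ℝ)
    (hs₁ : 0 < s₁) (hs₂ : 0 < s₂) (hs₂1 : s₂ ≤ 1) (hs : 2 * s₁ < 3 * s₂)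
    (hg_mono : ∀ x y : ℝ, 0 < x → x ≤ y → g x ≤ g y)
    (hg_pos : ∀ x : ℝ, 0 < x → 0 < g x)
    (hg_bnd : ∃ x₀ > (0 : ℝ), ∀ x : ℝ, 0 < x → x < x₀ → x ^ s₁ < g x ∧ g x < x ^ s₂)
    (hψ_pos : ∀ x : ℝ, 0 < x → 0 < ψ x)
    (hψ_dec : ∀ x y : ℝ, 0 < x → x ≤ y → ψ y ≤ ψ x)
    (hsmall : ∀ᶠ n : ℕ in Filter.atTop,
      (2 : ℝ) ^ (3 * n) * g (ψ ((2 : ℝ) ^ n) / (2 : ℝ) ^ n) < 1) :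
    Summable (fun n : ℕ =>
      (2 : ℝ) ^ (n + 1) * g (Real.sqrt (8 * ψ ((2 : ℝ) ^ n) / (2 : ℝ) ^ n))) := by
  obtain ⟨x₀, hx₀, hbnd⟩ := hg_bnd
  set a : ℝ := 3 * s₂ / (2 * s₁) with ha_def
  have h2s₁ : 0 < 2 * s₁ := by linarith
  have ha1 : 1 < a := (one_lt_div h2s₁).2 (by linarith)
  set r : ℝ := (2 : ℝ) ^ (1 - a) with hr_def
  have hr0 : 0 < r := Real.rpow_pos_of_pos two_pos _
  have hr1 : r < 1 := Real.rpow_lt_one_of_one_lt_of_neg one_lt_two (by linarith)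
  have hψ2 : 0 < ψ 2 := hψ_pos 2 two_pos
  have htend : Filter.Tendsto (fun n : ℕ => ψ 2 / (2:ℝ) ^ n) Filter.atTop (nhds 0) :=
    Filter.Tendsto.div_atTop tendsto_const_nhds
      (tendsto_pow_atTop_atTop_of_one_lt (one_lt_two : (1:ℝ) < 2))
  have hev1 : ∀ᶠ n : ℕ in Filter.atTop, ψ 2 / (2:ℝ)^n < x₀ :=
    htend.eventually_lt_const hx₀
  have hev2 : ∀ᶠ n : ℕ in Filter.atTop, 8 * (ψ 2 / (2:ℝ)^n) < x₀ ^ 2 := by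
    have h8 : Filter.Tendsto (fun n : ℕ => 8 * (ψ 2 / (2:ℝ)^n)) Filter.atTop (nhds 0) := by
      simpa using htend.const_mul (8:ℝ)
    exact h8.eventually_lt_const (by positivity)
  have hev3 : ∀ᶠ n : ℕ in Filter.atTop, 1 ≤ n := Filter.eventually_ge_atTop 1
  set C : ℝ := 2 * (8:ℝ) ^ (s₂ / 2) with hC_def
  have key : ∀ᶠ n : ℕ in Filter.atTop,
      ‖(2 : ℝ) ^ (n + 1) * g (Real.sqrt (8 * ψ ((2 : ℝ) ^ n) / (2 : ℝ) ^ n))‖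
        ≤ C * ‖r ^ n‖ := by
    filter_upwards [hsmall, hev1, hev2, hev3] with n hn1 hn2 hn3 hn4
    have h2n : (0:ℝ) < (2:ℝ) ^ n := by positivity
    set x : ℝ := ψ ((2:ℝ)^n) / (2:ℝ)^n with hx_def
    have hx : 0 < x := div_pos (hψ_pos _ h2n) h2n
    have h2le : (2:ℝ) ≤ (2:ℝ)^n := by
      calc (2:ℝ) = 2^1 := (pow_one 2).symm
      _ ≤ 2^n := pow_le_pow_right₀ one_le_two hn4
    have hxψ2 : x ≤ ψ 2 / (2:ℝ)^n := by
      rw [hx_def]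
      gcongr
      exact hψ_dec 2 _ two_pos h2le
    have hxx₀ : x < x₀ := lt_of_le_of_lt hxψ2 hn2
    obtain ⟨hlow, _⟩ := hbnd x hx hxx₀
    have hxs : x ^ s₁ < (2:ℝ) ^ (-(3*(n:ℝ))) := by
      have h1 : g x < 1 / (2:ℝ)^(3*n) := (lt_div_iff₀' (by positivity)).2 hn1
      have h2 : (2:ℝ) ^ (-(3*(n:ℝ))) = 1 / (2:ℝ)^(3*n) := by
        rw [Real.rpow_neg (by norm_num), one_div]
        congr 1
        rw [← Real.rpow_natCast (2:ℝ) (3*n)]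
        push_cast
        ring_nf
      rw [h2]; exact hlow.trans h1
    have hxlt : x < (2:ℝ) ^ (-(3*(n:ℝ)) * s₁⁻¹) := by
      have h3 : (x ^ s₁) ^ s₁⁻¹ < ((2:ℝ) ^ (-(3*(n:ℝ)))) ^ s₁⁻¹ :=
        Real.rpow_lt_rpow (Real.rpow_nonneg hx.le _) hxs (inv_pos.2 hs₁)
      rwa [← Real.rpow_mul hx.le, mul_inv_cancel₀ hs₁.ne', Real.rpow_one,
        ← Real.rpow_mul (by norm_num : (0:ℝ) ≤ 2)] at h3
    have h8x : 8 * ψ ((2:ℝ)^n) / (2:ℝ)^n = 8 * x := by rw [hx_def]; ring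
    have hy0 : 0 < Real.sqrt (8*x) := Real.sqrt_pos.2 (by positivity)
    have hyx₀ : Real.sqrt (8*x) < x₀ := by
      have h8lt : 8 * x < x₀^2 := lt_of_le_of_lt (by nlinarith) hn3
      calc Real.sqrt (8*x) < Real.sqrt (x₀^2) := Real.sqrt_lt_sqrt (by positivity) h8lt
        _ = x₀ := Real.sqrt_sq hx₀.le
    obtain ⟨-, hup⟩ := hbnd _ hy0 hyx₀
    have hsq : Real.sqrt (8*x) ^ s₂ = (8:ℝ)^(s₂/2) * x ^ (s₂/2) := by
      rw [Real.sqrt_eq_rpow, ← Real.rpow_mul (by positivity),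
        Real.mul_rpow (by norm_num) hx.le]
      ring_nf
    have hxle : x ^ (s₂/2) ≤ (2:ℝ) ^ (-((n:ℝ)*a)) := by
      have h4 : x ^ (s₂/2) ≤ ((2:ℝ) ^ (-(3*(n:ℝ)) * s₁⁻¹)) ^ (s₂/2) :=
        Real.rpow_le_rpow hx.le hxlt.le (by positivity)
      rwa [← Real.rpow_mul (by norm_num : (0:ℝ) ≤ 2),
        show (-(3*(n:ℝ)) * s₁⁻¹) * (s₂/2) = -((n:ℝ)*a) by
          rw [ha_def]; field_simp] at h4
    have hg0 : 0 ≤ g (Real.sqrt (8 * ψ ((2:ℝ)^n) / (2:ℝ)^n)) := by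
      rw [h8x]; exact (hg_pos _ hy0).le
    have e1 : (2:ℝ)^(n+1) = 2 * (2:ℝ)^((n:ℝ)) := by
      rw [pow_succ, ← Real.rpow_natCast (2:ℝ) n]; ring
    have e2 : ((2:ℝ)^((n:ℝ))) * (2:ℝ)^(-((n:ℝ)*a)) = (2:ℝ)^((1-a)*(n:ℝ)) := by
      rw [← Real.rpow_add two_pos]; congr 1; ring
    have e3 : r ^ n = (2:ℝ)^((1-a)*(n:ℝ)) := by
      rw [hr_def, ← Real.rpow_natCast ((2:ℝ)^((1:ℝ)-a)) n,
        ← Real.rpow_mul (by norm_num : (0:ℝ) ≤ 2)]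
    rw [Real.norm_of_nonneg (mul_nonneg (by positivity) hg0),
      Real.norm_of_nonneg (pow_nonneg hr0.le n)]
    calc (2:ℝ)^(n+1) * g (Real.sqrt (8 * ψ ((2:ℝ)^n) / (2:ℝ)^n))
        ≤ (2:ℝ)^(n+1) * ((8:ℝ)^(s₂/2) * (2:ℝ)^(-((n:ℝ)*a))) := by
          apply mul_le_mul_of_nonneg_left _ (by positivity)
          rw [h8x]
          calc g (Real.sqrt (8*x)) ≤ Real.sqrt (8*x) ^ s₂ := hup.le
            _ = (8:ℝ)^(s₂/2) * x ^ (s₂/2) := hsq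
            _ ≤ (8:ℝ)^(s₂/2) * (2:ℝ)^(-((n:ℝ)*a)) := by
                apply mul_le_mul_of_nonneg_left hxle (by positivity)
      _ = C * r ^ n := by rw [e1, e3, ← e2, hC_def]; ring
  have hgeo : Summable (fun n : ℕ => r ^ n) := summable_geometric_of_lt_one hr0.le hr1
  exact summable_of_isBigO_nat hgeo (Asymptotics.isBigO_iff.2 ⟨C, key⟩)
end

section
/- (Case I) Let ψ be an approximating function and g a dimension function satisfying x^{s₁} < g(x) < x^{s₂} for small x with 0 < s₁, 0 < s₂ ≤ 1, 2s₁ < 3s₂, and q⁻¹g(q) → ∞ as q → 0. If ∑_{q=1}^∞ g(ψ(q)/q)q² < ∞, then the set of x ∈ [0,1] such that |a₂x² + a₁x + a₀| < ψ(max(|a₁|,|a₂|)) for infinitely many integer triples (a₀,a₁,a₂) for which the quadratic a₂X² + a₁X + a₀ has a repeated root, has g-dimensional Hausdorff measure zero. -/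
/-!
A quadratic over `ℤ` with a repeated root is `k (uX + v)²`, so `|a₂x² + a₁x + a₀| < ψ(H)` confines
`x` to an interval around `-v/u` of radius `√(ψ(H) / t)`, where `t = |k|u² = |a₂| ≤ H`. Since
`q ↦ g(ψ(q)/q)` decreases, summing it against `q²` over dyadic blocks shows
`g(ψ(q)/q) = o(q⁻³)`, and `x^{s₁} < g(x) < x^{s₂}` turns this into `g(2√(ψ(t)/t)) = o(t^{-p})`
with `p = 3s₂/(2s₁) > 1`. For `x ∈ [0, 1]` only `O(|u|)` values of `v` occur, and
`∑_{k,u} |u| (|k|u²)^{-p} < ∞`, so covering by the intervals of height at least `N` costs `o(1)`.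
-/

open MeasureTheory Filter Topology Set
open scoped ENNReal

theorem Int.exists_eq_mul_sq_of_discrim_eq_zero {a b c : ℤ} (ha : a ≠ 0)
    (h : discrim a b c = 0) :
    ∃ k u v : ℤ, a = k * u ^ 2 ∧ b = 2 * k * u * v ∧ c = k * v ^ 2 := by
  rw [discrim, sub_eq_zero] at h
  obtain ⟨e, rfl⟩ : 2 ∣ b := Int.prime_two.dvd_of_dvd_pow (n := 2) ⟨2 * a * c, by linarith⟩
  have he : e ^ 2 = a * c := by linarith
  obtain ⟨d, a', e', hd, hcop, rfl, rfl⟩ := Int.exists_gcd_one' (Int.gcd_pos_of_ne_zero_left e ha)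
  have hd0 : (d : ℤ) ≠ 0 := by positivity
  have ha' : a' ≠ 0 := left_ne_zero_of_mul ha
  have hc : e' ^ 2 * d = a' * c := mul_left_cancel₀ hd0 (by linear_combination he)
  obtain ⟨f, hf⟩ : a' ∣ d :=
    (Int.isCoprime_iff_gcd_eq_one.2 hcop).pow_right.dvd_of_dvd_mul_left ⟨c, hc⟩
  refine ⟨f, a', e', by rw [hf]; ring, by rw [hf]; ring, mul_left_cancel₀ ha' ?_⟩
  linear_combination -hc + e' ^ 2 * hf

theorem finite_setOf_discrim_eq_zero_of_height_le (N : ℤ) :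
    {a : ℤ × ℤ × ℤ | a.2.2 ≠ 0 ∧ discrim a.2.2 a.2.1 a.1 = 0 ∧ max |a.2.1| |a.2.2| ≤ N}.Finite := by
  refine Set.Finite.of_finite_image (f := fun a => (a.2.1, a.2.2))
    (((finite_Icc (-N) N).prod (finite_Icc (-N) N)).subset ?_) ?_
  · rintro _ ⟨a, ⟨-, -, hN⟩, rfl⟩
    rw [max_le_iff, abs_le, abs_le] at hN
    exact ⟨hN.1, hN.2⟩
  · rintro ⟨c, b, a⟩ ⟨ha, h, -⟩ ⟨c', b', a'⟩ ⟨-, h', -⟩ hbb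
    obtain ⟨rfl, rfl⟩ := Prod.mk.inj hbb
    have : 4 * a * c = 4 * a * c' := by rw [discrim] at h h'; linarith
    rw [mul_left_cancel₀ (mul_ne_zero four_ne_zero ha) this]

theorem tendsto_mul_pow_three_of_summable_mul_sq {b : ℕ → ℝ} (hb0 : ∀ q, 1 ≤ q → 0 ≤ b q)
    (hb : AntitoneOn b (Ici 1)) (hsum : Summable fun q : ℕ => b q * (q : ℝ) ^ 2) :
    Tendsto (fun q : ℕ => b q * (q : ℝ) ^ 3) atTop (𝓝 0) := by
  set a : ℕ → ℝ := fun q => b q * (q : ℝ) ^ 2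
  have ha0 : ∀ q, 1 ≤ q → 0 ≤ a q := fun q hq => mul_nonneg (hb0 q hq) (sq_nonneg _)
  have htail : Tendsto (fun t : ℕ => ∑' k, a (k + (t / 2 + 1))) atTop (𝓝 0) :=
    (tendsto_sum_nat_add a).comp (tendsto_atTop_atTop.2 fun n => ⟨2 * n, fun t ht => by omega⟩)
  refine squeeze_zero' ?_ ?_ (by simpa using htail.const_mul 8)
  · filter_upwards [eventually_ge_atTop 1] with t ht using mul_nonneg (hb0 t ht) (by positivity)
  filter_upwards [eventually_ge_atTop 1] with t ht
  set n := t / 2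
  -- the block `n < q ≤ t` of the series has `t - n ≥ t / 2` terms, each at least `b t (t / 2)²`
  have hblock : ((t - n : ℕ) : ℝ) * (b t * ((n : ℝ) + 1) ^ 2) ≤
      ∑ k ∈ Finset.range (t - n), a (k + (n + 1)) := by
    rw [show ((t - n : ℕ) : ℝ) * (b t * ((n : ℝ) + 1) ^ 2) =
      ∑ _k ∈ Finset.range (t - n), b t * ((n : ℝ) + 1) ^ 2 by simp]
    refine Finset.sum_le_sum fun k hk => ?_
    have hk : k + (n + 1) ≤ t := by rw [Finset.mem_range] at hk; omega
    have hkn : ((n : ℝ) + 1) ≤ ((k + (n + 1) : ℕ) : ℝ) := by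
      push_cast; linarith [k.cast_nonneg (α := ℝ)]
    exact mul_le_mul (hb (mem_Ici.2 (by omega)) (mem_Ici.2 ht) hk) (by gcongr)
      (by positivity) (hb0 _ (by omega))
  have h₁ : (t : ℝ) ≤ 2 * ((t - n : ℕ) : ℝ) := by exact_mod_cast (by omega : t ≤ 2 * (t - n))
  have h₂ : (t : ℝ) ≤ 2 * ((n : ℝ) + 1) := by exact_mod_cast (by omega : t ≤ 2 * (n + 1))
  have hbt := hb0 t ht
  calc b t * (t : ℝ) ^ 3 = b t * ((t : ℝ) * (t : ℝ) ^ 2) := by ring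
    _ ≤ b t * ((2 * ((t - n : ℕ) : ℝ)) * (2 * ((n : ℝ) + 1)) ^ 2) := by gcongr
    _ = 8 * (((t - n : ℕ) : ℝ) * (b t * ((n : ℝ) + 1) ^ 2)) := by ring
    _ ≤ 8 * ∑' k, a (k + (n + 1)) := by
        gcongr
        exact hblock.trans (((summable_nat_add_iff (n + 1)).2 hsum).sum_le_tsum _
          fun k _ => ha0 _ (by omega))

theorem apply_two_mul_sqrt_le {g : ℝ → ℝ} {s₁ s₂ y : ℝ} (hs₁ : 0 < s₁) (hs₂ : 0 ≤ s₂)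
    (hs₂1 : s₂ ≤ 1) (hy : 0 ≤ y) (hlow : y ^ s₁ ≤ g y) (hup : g (2 * √y) ≤ (2 * √y) ^ s₂) :
    g (2 * √y) ≤ 2 * g y ^ (s₂ / (2 * s₁)) := by
  calc g (2 * √y) ≤ (2 * √y) ^ s₂ := hup
    _ = 2 ^ s₂ * (y ^ s₁) ^ (s₂ / (2 * s₁)) := by
        rw [Real.mul_rpow zero_le_two (Real.sqrt_nonneg y), Real.sqrt_eq_rpow,
          ← Real.rpow_mul hy, ← Real.rpow_mul hy]
        congr 2
        field_simp
    _ ≤ 2 ^ (1 : ℝ) * g y ^ (s₂ / (2 * s₁)) := by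
        gcongr
        exact one_le_two
    _ = 2 * g y ^ (s₂ / (2 * s₁)) := by rw [Real.rpow_one]

theorem tendsto_apply_two_mul_sqrt_div_mul_rpow {g ψ : ℝ → ℝ} {s₁ s₂ x₀ : ℝ} (hs₁ : 0 < s₁)
    (hs₂ : 0 < s₂) (hs₂1 : s₂ ≤ 1) (hg : MonotoneOn g (Ioi 0)) (hg_pos : ∀ x : ℝ, 0 < x → 0 < g x)
    (hx₀ : 0 < x₀) (hbnd : ∀ x : ℝ, 0 < x → x < x₀ → x ^ s₁ < g x ∧ g x < x ^ s₂)
    (hψ_pos : ∀ x : ℝ, 0 < x → 0 < ψ x) (hψ : AntitoneOn ψ (Ioi 0))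
    (hsum : Summable fun q : ℕ => g (ψ q / q) * (q : ℝ) ^ 2) :
    Tendsto (fun t : ℕ => g (2 * √(ψ t / t)) * (t : ℝ) ^ (3 * (s₂ / (2 * s₁)))) atTop (𝓝 0) := by
  set τ := s₂ / (2 * s₁)
  have hτ : 0 < τ := by positivity
  set y : ℕ → ℝ := fun t => ψ t / t
  have hy_pos : ∀ t, 1 ≤ t → 0 < y t := fun t ht => by
    have : (0 : ℝ) < t := by exact_mod_cast ht
    exact div_pos (hψ_pos _ this) this
  have hψ_le : ∀ {t t' : ℕ}, 1 ≤ t → t ≤ t' → ψ t' ≤ ψ t := fun ht htt' =>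
    hψ (mem_Ioi.2 (Nat.cast_pos.2 ht)) (mem_Ioi.2 (Nat.cast_pos.2 (ht.trans htt')))
      (by exact_mod_cast htt')
  have hy_anti : AntitoneOn y (Ici 1) := fun t ht t' _ htt' =>
    div_le_div₀ (hψ_pos _ (Nat.cast_pos.2 ht)).le (hψ_le ht htt') (Nat.cast_pos.2 ht)
      (by exact_mod_cast htt')
  have hy : Tendsto y atTop (𝓝 0) := by
    refine squeeze_zero' ?_ ?_ (tendsto_const_div_atTop_nhds_zero_nat (ψ 1))
    · filter_upwards [eventually_ge_atTop 1] with t ht using (hy_pos t ht).le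
    · filter_upwards [eventually_ge_atTop 1] with t ht
      exact div_le_div_of_nonneg_right (by simpa using hψ_le le_rfl ht) t.cast_nonneg
  have htail : Tendsto (fun t : ℕ => g (y t) * (t : ℝ) ^ 3) atTop (𝓝 0) :=
    tendsto_mul_pow_three_of_summable_mul_sq (fun t ht => (hg_pos _ (hy_pos t ht)).le)
      (fun t ht t' ht' htt' => hg (hy_pos t' ht') (hy_pos t ht) (hy_anti ht ht' htt')) hsum
  have hsqrt : Tendsto (fun t => 2 * √(y t)) atTop (𝓝 0) := by
    simpa using hy.sqrt.const_mul 2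
  have hsqrt_pos : ∀ t, 1 ≤ t → 0 < 2 * √(y t) := fun t ht =>
    mul_pos two_pos (Real.sqrt_pos.2 (hy_pos t ht))
  refine squeeze_zero' ?_ ?_ (by simpa [Real.zero_rpow hτ.ne'] using
    (htail.rpow_const (Or.inr hτ.le)).const_mul 2)
  · filter_upwards [eventually_ge_atTop 1] with t ht
    exact mul_nonneg (hg_pos _ (hsqrt_pos t ht)).le (by positivity)
  filter_upwards [eventually_ge_atTop 1, hy.eventually (gt_mem_nhds hx₀),
    hsqrt.eventually (gt_mem_nhds hx₀)] with t ht hyt hst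
  calc g (2 * √(y t)) * (t : ℝ) ^ (3 * τ) ≤ 2 * g (y t) ^ τ * (t : ℝ) ^ (3 * τ) := by
        gcongr
        exact apply_two_mul_sqrt_le hs₁ hs₂.le hs₂1 (hy_pos t ht).le
          (hbnd _ (hy_pos t ht) hyt).1.le (hbnd _ (hsqrt_pos t ht) hst).2.le
    _ = 2 * (g (y t) * (t : ℝ) ^ 3) ^ τ := by
        rw [Real.mul_rpow (hg_pos _ (hy_pos t ht)).le (by positivity), ← Real.rpow_natCast,
          ← Real.rpow_mul t.cast_nonneg]
        push_cast
        ring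

namespace RepeatedRoot

/-! `w = (k, u, v)` stands for the quadratic `k (uX + v)² = a₂X² + a₁X + a₀`: `height w` is
`max |a₁| |a₂|`, `lead w` is `|a₂|`, and `interval ψ w` contains every `x` at which
`|k (ux + v)²| < ψ (height w)`. -/

def height (w : ℤ × ℤ × ℤ) : ℤ := max |2 * w.1 * w.2.1 * w.2.2| |w.1 * w.2.1 ^ 2|

def lead (w : ℤ × ℤ × ℤ) : ℕ := (w.1 * w.2.1 ^ 2).natAbs

noncomputable def radius (ψ : ℝ → ℝ) (w : ℤ × ℤ × ℤ) : ℝ := √(ψ (height w) / lead w)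

noncomputable def interval (ψ : ℝ → ℝ) (w : ℤ × ℤ × ℤ) : Set ℝ :=
  Icc (-w.2.2 / w.2.1 - radius ψ w) (-w.2.2 / w.2.1 + radius ψ w)

def bounded (R : ℕ) : Set (ℤ × ℤ × ℤ) := {w | w.1 ≠ 0 ∧ w.2.1 ≠ 0 ∧ |w.2.2| ≤ (R + 1) * |w.2.1|}

def index (R N : ℕ) : Set (ℤ × ℤ × ℤ) := {w ∈ bounded R | (N : ℤ) ≤ height w}

variable {g ψ : ℝ → ℝ} {w : ℤ × ℤ × ℤ}

theorem lead_cast (w : ℤ × ℤ × ℤ) : (lead w : ℝ) = |(w.1 : ℝ)| * (w.2.1 : ℝ) ^ 2 := by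
  rw [lead, Nat.cast_natAbs]
  push_cast
  rw [abs_mul, abs_pow, sq_abs]

theorem one_le_lead (hk : w.1 ≠ 0) (hu : w.2.1 ≠ 0) : 1 ≤ lead w :=
  Nat.one_le_iff_ne_zero.2 (Int.natAbs_ne_zero.2 (mul_ne_zero hk (pow_ne_zero 2 hu)))

theorem lead_le_height (w : ℤ × ℤ × ℤ) : (lead w : ℤ) ≤ height w := by
  rw [lead, Int.natCast_natAbs]
  exact le_max_right _ _

theorem height_le_of_mem_bounded {R : ℕ} (hw : w ∈ bounded R) :
    height w ≤ 2 * (R + 1) * lead w := by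
  obtain ⟨-, -, hv⟩ := hw
  rw [lead, Int.natCast_natAbs, height, max_le_iff]
  have : (1 : ℤ) ≤ 2 * (R + 1) := by omega
  constructor
  · calc |2 * w.1 * w.2.1 * w.2.2| = 2 * |w.1| * |w.2.1| * |w.2.2| := by simp [abs_mul]
      _ ≤ 2 * |w.1| * |w.2.1| * ((R + 1) * |w.2.1|) := by gcongr
      _ = 2 * (R + 1) * |w.1 * w.2.1 ^ 2| := by rw [abs_mul, abs_pow, sq]; ring
  · exact le_mul_of_one_le_left (abs_nonneg _) this

theorem radius_le (hψ : AntitoneOn ψ (Ioi 0)) (hk : w.1 ≠ 0) (hu : w.2.1 ≠ 0) :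
    radius ψ w ≤ √(ψ (lead w) / lead w) := by
  have h1 : (1 : ℝ) ≤ lead w := by exact_mod_cast one_le_lead hk hu
  have h2 : (lead w : ℝ) ≤ height w := by exact_mod_cast lead_le_height w
  refine Real.sqrt_le_sqrt (div_le_div_of_nonneg_right ?_ (by positivity))
  exact hψ (mem_Ioi.2 (by linarith)) (mem_Ioi.2 (by linarith)) h2

theorem radius_pos (hψ_pos : ∀ x : ℝ, 0 < x → 0 < ψ x) (hk : w.1 ≠ 0) (hu : w.2.1 ≠ 0) :
    0 < radius ψ w := by
  have h1 : (1 : ℝ) ≤ lead w := by exact_mod_cast one_le_lead hk hu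
  have h2 : (lead w : ℝ) ≤ height w := by exact_mod_cast lead_le_height w
  exact Real.sqrt_pos.2 (div_pos (hψ_pos _ (by linarith)) (by linarith))

theorem ediam_interval (ψ : ℝ → ℝ) (w : ℤ × ℤ × ℤ) :
    Metric.ediam (interval ψ w) = ENNReal.ofReal (2 * radius ψ w) := by
  rw [interval, Real.ediam_Icc]
  ring_nf

theorem toReal_ediam_interval (ψ : ℝ → ℝ) (w : ℤ × ℤ × ℤ) :
    (Metric.ediam (interval ψ w)).toReal = 2 * radius ψ w := by
  rw [ediam_interval]
  exact ENNReal.toReal_ofReal (mul_nonneg zero_le_two (Real.sqrt_nonneg _))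

theorem exists_mem_interval {x : ℝ} {a : ℤ × ℤ × ℤ} (ha : a.2.2 ≠ 0)
    (hdisc : discrim a.2.2 a.2.1 a.1 = 0)
    (hlt : |(a.2.2 : ℝ) * x ^ 2 + (a.2.1 : ℝ) * x + (a.1 : ℝ)| < ψ (max |a.2.1| |a.2.2| : ℤ)) :
    ∃ w, w.1 ≠ 0 ∧ w.2.1 ≠ 0 ∧ height w = max |a.2.1| |a.2.2| ∧ x ∈ interval ψ w := by
  obtain ⟨k, u, v, h₂, h₁, h₀⟩ := Int.exists_eq_mul_sq_of_discrim_eq_zero ha hdisc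
  have hk : k ≠ 0 := left_ne_zero_of_mul (h₂ ▸ ha)
  have hu : u ≠ 0 := pow_ne_zero_iff two_ne_zero |>.1 (right_ne_zero_of_mul (h₂ ▸ ha))
  have hH : height (k, u, v) = max |a.2.1| |a.2.2| := by rw [h₁, h₂]; rfl
  refine ⟨(k, u, v), hk, hu, hH, ?_⟩
  have hpoly : (a.2.2 : ℝ) * x ^ 2 + a.2.1 * x + a.1 = k * (u * x + v) ^ 2 := by
    rw [h₀, h₁, h₂]; push_cast; ring
  have hsq : (x - -v / u) ^ 2 * lead (k, u, v) < ψ (height (k, u, v)) := by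
    have hu' : (u : ℝ) ≠ 0 := by exact_mod_cast hu
    rw [lead_cast, hH]
    convert hlt using 1
    rw [hpoly, abs_mul, abs_of_nonneg (sq_nonneg ((u : ℝ) * x + v))]
    field_simp
    ring
  have hdist : |x - -v / u| ≤ radius ψ (k, u, v) :=
    Real.abs_le_sqrt ((le_div_iff₀ (by exact_mod_cast one_le_lead hk hu)).2 hsq.le)
  exact ⟨by linarith [neg_abs_le (x - -v / u)], by linarith [le_abs_self (x - -v / u)]⟩

theorem abs_le_of_mem_interval {x : ℝ} {R : ℕ} (hx : x ∈ Icc (0 : ℝ) 1) (hu : w.2.1 ≠ 0)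
    (hxw : x ∈ interval ψ w) (hR : radius ψ w ≤ R) : |w.2.2| ≤ (R + 1) * |w.2.1| := by
  have hu' : (0 : ℝ) < |(w.2.1 : ℝ)| := abs_pos.2 (by exact_mod_cast hu)
  have hc : |(-w.2.2 / w.2.1 : ℝ)| ≤ R + 1 := by
    obtain ⟨h₁, h₂⟩ := hxw
    rw [abs_le]
    constructor <;> linarith [hx.1, hx.2]
  rw [abs_div, abs_neg, div_le_iff₀ hu'] at hc
  exact_mod_cast hc

theorem radius_le_sqrt_one_div (hψ : AntitoneOn ψ (Ioi 0)) (hk : w.1 ≠ 0) (hu : w.2.1 ≠ 0) :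
    radius ψ w ≤ √(ψ 1 / lead w) := by
  have h1 : (1 : ℝ) ≤ lead w := by exact_mod_cast one_le_lead hk hu
  refine (radius_le hψ hk hu).trans (Real.sqrt_le_sqrt (div_le_div_of_nonneg_right ?_ ?_))
  · exact hψ (mem_Ioi.2 one_pos) (mem_Ioi.2 (by linarith)) h1
  · positivity

theorem radius_le_of_mem_index (hψ : AntitoneOn ψ (Ioi 0)) (hψ₁ : 0 ≤ ψ 1) {R N : ℕ}
    (hN : 0 < N) (hw : w ∈ index R N) : radius ψ w ≤ √(ψ 1 * (2 * (R + 1)) / N) := by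
  obtain ⟨hb, hNw⟩ := hw
  have ⟨hk, hu, _⟩ := hb
  refine (radius_le_sqrt_one_div hψ hk hu).trans (Real.sqrt_le_sqrt ?_)
  have hNlead : (N : ℝ) ≤ 2 * (R + 1) * lead w := by
    exact_mod_cast hNw.trans (height_le_of_mem_bounded hb)
  have h1 : (0 : ℝ) < lead w := by exact_mod_cast one_le_lead hk hu
  rw [div_le_div_iff₀ h1 (by exact_mod_cast hN)]
  nlinarith

theorem subset_iUnion_interval (hψ_pos : ∀ x : ℝ, 0 < x → 0 < ψ x) (hψ : AntitoneOn ψ (Ioi 0))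
    {R : ℕ} (hR : √(ψ 1) ≤ R) (N : ℕ) :
    {x : ℝ | x ∈ Icc (0 : ℝ) 1 ∧
      {a : ℤ × ℤ × ℤ | a.2.2 ≠ 0 ∧ discrim a.2.2 a.2.1 a.1 = 0 ∧
        |(a.2.2 : ℝ) * x ^ 2 + (a.2.1 : ℝ) * x + (a.1 : ℝ)| <
          ψ ((max |a.2.1| |a.2.2| : ℤ) : ℝ)}.Infinite} ⊆ ⋃ i : index R N, interval ψ i := by
  rintro x ⟨hx, hinf⟩
  obtain ⟨a, ⟨ha, hdisc, hlt⟩, haN⟩ :=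
    (hinf.sdiff (finite_setOf_discrim_eq_zero_of_height_le N)).nonempty
  have hN : (N : ℤ) < max |a.2.1| |a.2.2| := lt_of_not_ge fun h => haN ⟨ha, hdisc, h⟩
  obtain ⟨w, hk, hu, hH, hxw⟩ := exists_mem_interval ha hdisc hlt
  have hrad : radius ψ w ≤ R := by
    have h1 : (1 : ℝ) ≤ lead w := by exact_mod_cast one_le_lead hk hu
    refine (radius_le_sqrt_one_div hψ hk hu).trans (le_trans (Real.sqrt_le_sqrt ?_) hR)
    exact div_le_self (hψ_pos 1 one_pos).le h1
  exact mem_iUnion.2 ⟨⟨w, ⟨hk, hu, abs_le_of_mem_interval hx hu hxw hrad⟩, hH ▸ hN.le⟩, hxw⟩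

theorem tsum_ofReal_abs_int_rpow_ne_top {b : ℝ} (hb : 1 < b) :
    ∑' n : ℤ, ENNReal.ofReal (|(n : ℝ)| ^ (-b)) ≠ ∞ := by
  rw [← ENNReal.ofReal_tsum_of_nonneg (fun _ => by positivity) (Real.summable_abs_int_rpow hb)]
  exact ENNReal.ofReal_ne_top

theorem tsum_indicator_bounded_le (R : ℕ) (p : ℝ) (k u : ℤ) :
    ∑' v : ℤ, (bounded R).indicator (fun w => ENNReal.ofReal ((lead w : ℝ) ^ (-p))) (k, u, v) ≤
      ENNReal.ofReal (|(k : ℝ)| ^ (-p)) *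
        ENNReal.ofReal ((2 * R + 3) * |(u : ℝ)| ^ (-(2 * p - 1))) := by
  rcases eq_or_ne u 0 with rfl | hu
  · simp [bounded]
  set M : ℤ := (R + 1) * |u| with hM
  have hM0 : 0 ≤ M := by positivity
  set c : ℝ := |(k : ℝ)| ^ (-p) * |(u : ℝ)| ^ (-(2 * p)) with hc
  have hpoint : ∀ v : ℤ,
      (bounded R).indicator (fun w => ENNReal.ofReal ((lead w : ℝ) ^ (-p))) (k, u, v) ≤
        (↑(Finset.Icc (-M) M) : Set ℤ).indicator (fun _ => ENNReal.ofReal c) v := by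
    intro v
    by_cases hv : (k, u, v) ∈ bounded R
    · have hvM : v ∈ Finset.Icc (-M) M := Finset.mem_Icc.2 (abs_le.1 hv.2.2)
      rw [indicator_of_mem hv, indicator_of_mem (Finset.mem_coe.2 hvM), lead_cast,
        Real.mul_rpow (abs_nonneg _) (sq_nonneg _), ← sq_abs, ← Real.rpow_natCast,
        ← Real.rpow_mul (abs_nonneg _)]
      refine le_of_eq (congrArg ENNReal.ofReal ?_)
      rw [hc]
      congr 2
      push_cast
      ring
    · rw [indicator_of_notMem hv]
      exact zero_le
  have hu1 : (1 : ℝ) ≤ |(u : ℝ)| := by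
    rw [← Int.cast_abs]; exact_mod_cast Int.one_le_abs hu
  have hcard : ((Finset.Icc (-M) M).card : ℝ) ≤ (2 * R + 3) * |(u : ℝ)| := by
    have hcast : (((2 * M + 1).toNat : ℤ) : ℝ) = 2 * M + 1 := by
      rw [Int.toNat_of_nonneg (by omega)]; push_cast; ring
    rw [Int.card_Icc, show M + 1 - -M = 2 * M + 1 by ring, ← Int.cast_natCast, hcast, hM]
    push_cast
    nlinarith
  calc _ ≤ ∑' v : ℤ, (↑(Finset.Icc (-M) M) : Set ℤ).indicator (fun _ => ENNReal.ofReal c) v :=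
        ENNReal.tsum_le_tsum hpoint
    _ = ENNReal.ofReal ((Finset.Icc (-M) M).card * c) := by
        rw [← sum_eq_tsum_indicator, Finset.sum_const, nsmul_eq_mul,
          ENNReal.ofReal_mul (Nat.cast_nonneg _), ENNReal.ofReal_natCast]
    _ ≤ _ := by
        rw [← ENNReal.ofReal_mul (by positivity)]
        refine ENNReal.ofReal_le_ofReal ?_
        have hpow : |(u : ℝ)| * |(u : ℝ)| ^ (-(2 * p)) = |(u : ℝ)| ^ (-(2 * p - 1)) := by
          rw [show -(2 * p - 1) = -(2 * p) + 1 by ring,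
            Real.rpow_add_one (by positivity), mul_comm]
        calc (Finset.Icc (-M) M).card * c ≤ (2 * R + 3) * |(u : ℝ)| * c := by gcongr
          _ = _ := by rw [← hpow]; ring

theorem tsum_bounded_ne_top (R : ℕ) {p : ℝ} (hp : 1 < p) :
    ∑' w : bounded R, ENNReal.ofReal ((lead w : ℝ) ^ (-p)) ≠ ∞ := by
  have hk := tsum_ofReal_abs_int_rpow_ne_top hp
  have hu := tsum_ofReal_abs_int_rpow_ne_top (b := 2 * p - 1) (by linarith)
  refine ne_top_of_le_ne_top (ENNReal.mul_ne_top hk (ENNReal.mul_ne_top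
    (ENNReal.natCast_ne_top (2 * R + 3)) hu)) ?_
  calc _ = ∑' k : ℤ, ∑' u : ℤ, ∑' v : ℤ,
        (bounded R).indicator (fun w => ENNReal.ofReal ((lead w : ℝ) ^ (-p))) (k, u, v) := by
        rw [tsum_subtype (bounded R) (fun w => ENNReal.ofReal ((lead w : ℝ) ^ (-p))),
          ENNReal.tsum_prod']
        simp_rw [ENNReal.tsum_prod']
    _ ≤ ∑' k : ℤ, ∑' u : ℤ, ENNReal.ofReal (|(k : ℝ)| ^ (-p)) *
          ((2 * R + 3 : ℕ) * ENNReal.ofReal (|(u : ℝ)| ^ (-(2 * p - 1)))) := by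
        refine ENNReal.tsum_le_tsum fun k => ENNReal.tsum_le_tsum fun u => ?_
        refine (tsum_indicator_bounded_le R p k u).trans_eq ?_
        rw [ENNReal.ofReal_mul (by positivity)]
        norm_cast
    _ = _ := by simp_rw [ENNReal.tsum_mul_left, ENNReal.tsum_mul_right]

theorem tendsto_tsum_index (hg : MonotoneOn g (Ioi 0)) (hψ_pos : ∀ x : ℝ, 0 < x → 0 < ψ x)
    (hψ : AntitoneOn ψ (Ioi 0)) {p : ℝ} (hp : 1 < p)
    (hsmall : Tendsto (fun t : ℕ => g (2 * √(ψ t / t)) * (t : ℝ) ^ p) atTop (𝓝 0)) (R : ℕ) :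
    Tendsto (fun N : ℕ => ∑' i : index R N, ENNReal.ofReal (g (2 * radius ψ i))) atTop (𝓝 0) := by
  rw [ENNReal.tendsto_nhds_zero]
  intro δ hδ
  obtain ⟨ε, hε, hεδ⟩ := ENNReal.exists_nnreal_pos_mul_lt (tsum_bounded_ne_top R hp) hδ.ne'
  obtain ⟨T, hT⟩ := eventually_atTop.1
    (hsmall.eventually (ge_mem_nhds (show (0 : ℝ) < ε from hε)))
  filter_upwards [eventually_ge_atTop (2 * (R + 1) * T)] with N hN
  have hterm : ∀ i : index R N,
      ENNReal.ofReal (g (2 * radius ψ i)) ≤ ε * ENNReal.ofReal ((lead i : ℝ) ^ (-p)) := by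
    rintro ⟨w, hb, hNw⟩
    have ⟨hk, hu, _⟩ := hb
    set t := lead w
    have ht0 : (0 : ℝ) < t := by exact_mod_cast one_le_lead hk hu
    have hTt : T ≤ t := by
      have : ((2 * (R + 1) * T : ℕ) : ℤ) ≤ 2 * (R + 1) * t :=
        (Int.ofNat_le.2 hN).trans (hNw.trans (height_le_of_mem_bounded hb))
      push_cast at this
      exact_mod_cast le_of_mul_le_mul_left this (by positivity)
    have hgt : g (2 * √(ψ t / t)) ≤ ε * (t : ℝ) ^ (-p) := by
      rw [Real.rpow_neg ht0.le, ← div_eq_mul_inv, le_div_iff₀ (by positivity)]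
      exact hT t hTt
    rw [← ENNReal.ofReal_coe_nnreal, ← ENNReal.ofReal_mul ε.coe_nonneg]
    refine ENNReal.ofReal_le_ofReal ((hg ?_ ?_ ?_).trans hgt)
    · exact mul_pos two_pos (radius_pos hψ_pos hk hu)
    · exact mul_pos two_pos (Real.sqrt_pos.2 (div_pos (hψ_pos _ ht0) ht0))
    · gcongr
      exact radius_le hψ hk hu
  calc ∑' i : index R N, ENNReal.ofReal (g (2 * radius ψ i))
      ≤ ∑' i : index R N, ε * ENNReal.ofReal ((lead i : ℝ) ^ (-p)) := ENNReal.tsum_le_tsum hterm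
    _ ≤ ∑' w : bounded R, ε * ENNReal.ofReal ((lead w : ℝ) ^ (-p)) :=
        ENNReal.tsum_mono_subtype (fun w => ε * ENNReal.ofReal ((lead w : ℝ) ^ (-p)))
          fun _ hw => hw.1
    _ ≤ δ := by rw [ENNReal.tsum_mul_left]; exact hεδ.le

end RepeatedRoot

theorem stmt15_general (g ψ : ℝ → ℝ) (s₁ s₂ : ℝ)
    (hs₁ : 0 < s₁) (hs₂ : 0 < s₂) (hs₂1 : s₂ ≤ 1) (hs : 2 * s₁ < 3 * s₂)
    (hg_mono : ∀ x y : ℝ, 0 < x → x ≤ y → g x ≤ g y)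
    (hg_pos : ∀ x : ℝ, 0 < x → 0 < g x)
    (hg_bnd : ∃ x₀ > (0 : ℝ), ∀ x : ℝ, 0 < x → x < x₀ → x ^ s₁ < g x ∧ g x < x ^ s₂)
    (hψ_pos : ∀ x : ℝ, 0 < x → 0 < ψ x)
    (hψ_dec : ∀ x y : ℝ, 0 < x → x ≤ y → ψ y ≤ ψ x)
    (hsum : Summable (fun q : ℕ => g (ψ q / q) * (q : ℝ) ^ 2)) :
    Measure.mkMetric (fun r : ℝ≥0∞ => ENNReal.ofReal (g r.toReal))
      {x : ℝ | x ∈ Set.Icc (0 : ℝ) 1 ∧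
        {a : ℤ × ℤ × ℤ | a.2.2 ≠ 0 ∧ a.2.1 ^ 2 - 4 * a.2.2 * a.1 = 0 ∧
          |(a.2.2 : ℝ) * x ^ 2 + (a.2.1 : ℝ) * x + (a.1 : ℝ)| <
            ψ ((max |a.2.1| |a.2.2| : ℤ) : ℝ)}.Infinite} = 0 := by
  obtain ⟨x₀, hx₀, hbnd⟩ := hg_bnd
  have hg : MonotoneOn g (Ioi 0) := fun x hx y _ hxy => hg_mono x y hx hxy
  have hψ : AntitoneOn ψ (Ioi 0) := fun x hx y _ hxy => hψ_dec x y hx hxy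
  have hp : 1 < 3 * (s₂ / (2 * s₁)) := by
    rw [← mul_div_assoc, one_lt_div (by positivity)]; linarith
  obtain ⟨R, hR⟩ : ∃ R : ℕ, √(ψ 1) ≤ R := ⟨_, Nat.le_ceil _⟩
  have hdiam : ∀ᶠ N : ℕ in atTop, ∀ i : RepeatedRoot.index R N,
      Metric.ediam (RepeatedRoot.interval ψ i) ≤
        ENNReal.ofReal (2 * √(ψ 1 * (2 * (R + 1)) / N)) := by
    filter_upwards [eventually_ge_atTop 1] with N hN i
    rw [RepeatedRoot.ediam_interval]
    gcongr
    exact RepeatedRoot.radius_le_of_mem_index hψ (hψ_pos 1 one_pos).le hN i.2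
  have hr : Tendsto (fun N : ℕ => ENNReal.ofReal (2 * √(ψ 1 * (2 * (R + 1)) / N))) atTop (𝓝 0) := by
    simpa using ENNReal.tendsto_ofReal
      ((tendsto_const_div_atTop_nhds_zero_nat (ψ 1 * (2 * (R + 1)))).sqrt.const_mul 2)
  have hsums := RepeatedRoot.tendsto_tsum_index hg hψ_pos hψ hp
    (tendsto_apply_two_mul_sqrt_div_mul_rpow hs₁ hs₂ hs₂1 hg hg_pos hx₀ hbnd hψ_pos hψ hsum) R
  have hle := Measure.mkMetric_le_liminf_tsum _ _ hr _ hdiam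
    (Eventually.of_forall (RepeatedRoot.subset_iUnion_interval hψ_pos hψ hR))
    (fun r : ℝ≥0∞ => ENNReal.ofReal (g r.toReal))
  simp only [RepeatedRoot.toReal_ediam_interval] at hle
  exact nonpos_iff_eq_zero.1 (hle.trans hsums.liminf_eq.le)

/-- Case I, repeated roots: Under the stated conditions on the approximating
function `ψ` and dimension function `g`, if `∑ g(ψ(q)/q)q² < ∞` then the set of `x ∈ [0,1]`
with `|a₂x² + a₁x + a₀| < ψ(max(|a₁|,|a₂|))` for infinitely many integer triples whose
quadratic has a repeated root has `g`-dimensional Hausdorff measure zero. -/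
theorem stmt15 (g ψ : ℝ → ℝ) (s₁ s₂ : ℝ)
    (hs₁ : 0 < s₁) (hs₂ : 0 < s₂) (hs₂1 : s₂ ≤ 1) (hs : 2 * s₁ < 3 * s₂)
    (hg_mono : ∀ x y : ℝ, 0 < x → x ≤ y → g x ≤ g y)
    (hg_cont : ContinuousOn g (Set.Ioi 0))
    (hg_pos : ∀ x : ℝ, 0 < x → 0 < g x)
    (hg_lim : Filter.Tendsto g (nhdsWithin 0 (Set.Ioi 0)) (nhds 0))
    (hg_bnd : ∃ x₀ > (0 : ℝ), ∀ x : ℝ, 0 < x → x < x₀ → x ^ s₁ < g x ∧ g x < x ^ s₂)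
    (hg_div : Filter.Tendsto (fun q : ℝ => g q / q) (nhdsWithin 0 (Set.Ioi 0)) Filter.atTop)
    (hψ_pos : ∀ x : ℝ, 0 < x → 0 < ψ x)
    (hψ_dec : ∀ x y : ℝ, 0 < x → x ≤ y → ψ y ≤ ψ x)
    (hsum : Summable (fun q : ℕ => g (ψ q / q) * (q : ℝ) ^ 2)) :
    Measure.mkMetric (fun r : ℝ≥0∞ => ENNReal.ofReal (g r.toReal))
      {x : ℝ | x ∈ Set.Icc (0 : ℝ) 1 ∧
        {a : ℤ × ℤ × ℤ | a.2.2 ≠ 0 ∧ a.2.1 ^ 2 - 4 * a.2.2 * a.1 = 0 ∧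
          |(a.2.2 : ℝ) * x ^ 2 + (a.2.1 : ℝ) * x + (a.1 : ℝ)| <
            ψ ((max |a.2.1| |a.2.2| : ℤ) : ℝ)}.Infinite} = 0 :=
  stmt15_general g ψ s₁ s₂ hs₁ hs₂ hs₂1 hs hg_mono hg_pos hg_bnd hψ_pos hψ_dec hsum
end
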